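/- Let G be a finite p-group, let j ≥ 1, and let T be a σ-invariant subgroup of B(γ_j(G)). Then, modulo B(γ_{j+1}(G)), one has [T, W(G)] = [T, ⟨σ⟩] = Δ(T) (in particular Δ(T)·B(γ_{j+1}(G)) is a subgroup). Consequently, for every subgroup J ≤ γ_j(G) and every k ≥ 1, one has [Δ^{k−1}(B(J)), W(G)] ≡ [Δ^{k−1}(B(J)), ⟨σ⟩] ≡ Δ^k(B(J)) modulo B(γ_{j+1}(G)). -/

import Mathlib

open Pointwise

namespace GGS
noncomputable section

variable (p : ℕ)

def shiftAut (G : Type*) [Group G] : Multiplicative (ZMod p) →* MulAut (ZMod p → G) :=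
  MonoidHom.mk'
    (fun k =>
      { toFun := fun g i => g (i + Multiplicative.toAdd k)
        invFun := fun g i => g (i - Multiplicative.toAdd k)
        left_inv := fun g => by funext i; simp
        right_inv := fun g => by funext i; simp
        map_mul' := fun g h => rfl })
    (fun k l => by
      apply MulEquiv.ext
      intro g
      funext i
      show g (i + Multiplicative.toAdd (k * l)) = g (i + Multiplicative.toAdd k + Multiplicative.toAdd l)
      rw [toAdd_mul, add_assoc])

abbrev W (G : Type*) [Group G] :=
  SemidirectProduct (ZMod p → G) (Multiplicative (ZMod p)) (shiftAut p G)

def inlW (G : Type*) [Group G] : (ZMod p → G) →* W p G := SemidirectProduct.inl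

def sigma (G : Type*) [Group G] : W p G := SemidirectProduct.inr (Multiplicative.ofAdd (1 : ZMod p))

def baseW (G : Type*) [Group G] : Subgroup (W p G) := (inlW p G).range

/-- Δ(g) = [g,σ] = g⁻¹ σ⁻¹ g σ, read off in the base group. -/
def Delta (G : Type*) [Group G] (g : ZMod p → G) : ZMod p → G :=
  ((inlW p G g)⁻¹ * (sigma p G)⁻¹ * inlW p G g * sigma p G).left

/-- γ₁* = B(G), γ_{i+1}* = [γ_i*, W(G)]; here `gammaStar n` is γ_{n+1}*. -/
def gammaStar (G : Type*) [Group G] : ℕ → Subgroup (W p G)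
  | 0 => baseW p G
  | (n + 1) => ⁅gammaStar G n, ⊤⁆

def lamG (G : Type*) [Group G] (g : G) (i : ℕ) : ZMod p → G :=
  (Delta p G)^[i - 1] (fun t => if t = 0 then g else 1)

def BSub (G : Type*) [Group G] (H : Subgroup G) : Subgroup (W p G) :=
  Subgroup.map (inlW p G) (Subgroup.pi Set.univ fun _ => H)

def inlF (F : Type*) [AddGroup F] (v : ZMod p → F) : W p (Multiplicative F) :=
  inlW p (Multiplicative F) (fun i => Multiplicative.ofAdd (v i))

def DeltaF (F : Type*) [AddGroup F] (v : ZMod p → F) : ZMod p → F :=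
  fun i => Multiplicative.toAdd (Delta p (Multiplicative F) (fun j => Multiplicative.ofAdd (v j)) i)

def lamF (F : Type*) [AddGroup F] [One F] (i : ℕ) : ZMod p → F :=
  (DeltaF p F)^[i - 1] (fun j => if j = 0 then 1 else 0)

end
end GGS

/-!
Put N = B(K), where H = γ_j(G) and K = γ_{j+1}(G) satisfy [H, G] ≤ K. Coordinatewise, every
element of B(H) then commutes with all of B(G) modulo N. Writing w ∈ W(G) as σᵏ b with b ∈ B(G),
this reduces [t, w] to [t, σᵏ] modulo N. It also turns Δ(vw) = w⁻¹ Δ(v) w(· - 1) into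
Δ(vw) ≡ Δ(v) Δ(w), so Δ is a homomorphism B(H) → W(G)/N and Δ(T) is a subgroup modulo N.
It contains [T, ⟨σ⟩] because [t, σⁿ⁺¹] ≡ [t, σⁿ] Δ(t') for a cyclic shift t' ∈ T of t, and it
lies in [T, ⟨σ⟩] because Δ(t) = [t⁻¹, σ⁻¹]. For T = ⟨Δᵏ⁻¹(B(J))⟩, the set Δᵐ(B(J)) is a subgroup modulo N by induction
on m, and Δ modulo N only depends on its argument modulo N, so Δ(T) ≡ Δᵏ(B(J)).
-/

open Pointwise Subgroup
open scoped commutatorElement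

namespace GGS

variable {p : ℕ} {G : Type*}

def shift (c : ZMod p) (v : ZMod p → G) : ZMod p → G := fun i => v (i + c)

@[simp]
lemma shift_apply (c : ZMod p) (v : ZMod p → G) (i : ZMod p) : shift c v i = v (i + c) := rfl

@[simp]
lemma shift_zero (v : ZMod p → G) : shift 0 v = v := by
  funext i; simp

lemma shift_shift (c d : ZMod p) (v : ZMod p → G) : shift c (shift d v) = shift (c + d) v := by
  funext i; simp [add_assoc, add_comm c]

lemma shift_neg_one (v : ZMod p → G) : shift (-1) v = fun i => v (i - 1) := by
  funext i; simp [sub_eq_add_neg]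

variable [Group G]

@[simp]
lemma shift_one (c : ZMod p) : shift c (1 : ZMod p → G) = 1 := rfl

lemma shift_mul (c : ZMod p) (v w : ZMod p → G) : shift c (v * w) = shift c v * shift c w := rfl

lemma shift_inv (c : ZMod p) (v : ZMod p → G) : shift c v⁻¹ = (shift c v)⁻¹ := rfl

@[simp]
lemma shiftAut_apply (k : Multiplicative (ZMod p)) (v : ZMod p → G) (i : ZMod p) :
    shiftAut p G k v i = v (i + Multiplicative.toAdd k) := rfl

@[simp]
lemma shiftAut_symm_apply (k : Multiplicative (ZMod p)) (v : ZMod p → G) (i : ZMod p) :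
    (shiftAut p G k).symm v i = v (i - Multiplicative.toAdd k) := rfl

lemma Delta_eq (v : ZMod p → G) : Delta p G v = v⁻¹ * shift (-1) v := by
  funext i
  simp [Delta, sigma, inlW, sub_eq_add_neg]

lemma Delta_mul (v w : ZMod p → G) :
    Delta p G (v * w) = w⁻¹ * Delta p G v * shift (-1) w := by
  simp only [Delta_eq, shift_mul]
  group

lemma shift_Delta (c : ZMod p) (v : ZMod p → G) :
    shift c (Delta p G v) = Delta p G (shift c v) := by
  simp only [Delta_eq, shift_mul, shift_inv, shift_shift, add_comm c]

lemma inlW_Delta (v : ZMod p → G) :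
    inlW p G (Delta p G v) = ⁅(inlW p G v)⁻¹, (sigma p G)⁻¹⁆ := by
  apply SemidirectProduct.ext
  · funext i
    simp [Delta, inlW, sigma, commutatorElement_def]
  · simp [inlW, sigma, commutatorElement_def]

lemma commutatorElement_inlW_inr (v : ZMod p → G) (c : ZMod p) :
    ⁅inlW p G v, SemidirectProduct.inr (Multiplicative.ofAdd c)⁆ = inlW p G (v * (shift c v)⁻¹) := by
  apply SemidirectProduct.ext
  · funext i
    simp [commutatorElement_def, inlW]
  · simp [commutatorElement_def, inlW]

lemma inr_mul_inlW (w : W p G) :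
    SemidirectProduct.inr w.right * inlW p G (shiftAut p G w.right⁻¹ w.left) = w := by
  apply SemidirectProduct.ext
  · funext i
    simp [inlW]
  · simp [inlW]

lemma inr_mem_zpowers_sigma (k : Multiplicative (ZMod p)) :
    SemidirectProduct.inr k ∈ zpowers (sigma p G) := by
  refine ⟨ZMod.cast (Multiplicative.toAdd k), ?_⟩
  simp only [sigma, ← map_zpow, ← ofAdd_zsmul, zsmul_one, ZMod.intCast_zmod_cast, ofAdd_toAdd]

lemma sigma_zpow (m : ℤ) :
    sigma p G ^ m = SemidirectProduct.inr (Multiplicative.ofAdd (m : ZMod p)) := by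
  simp only [sigma, ← map_zpow, ← ofAdd_zsmul, zsmul_one]

lemma inlW_mem_BSub {H : Subgroup G} {v : ZMod p → G} : inlW p G v ∈ BSub p G H ↔ ∀ i, v i ∈ H := by
  simp [BSub, inlW, mem_pi, SemidirectProduct.inl_injective.eq_iff]

instance BSub.normal (H : Subgroup G) [H.Normal] : (BSub p G H).Normal where
  conj_mem := by
    rintro _ ⟨v, hv, rfl⟩ w
    have hconj : w * inlW p G v * w⁻¹ = inlW p G (w.left * shiftAut p G w.right v * w.left⁻¹) := by
      apply SemidirectProduct.ext
      · funext i
        simp [inlW]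
      · simp [inlW]
    rw [hconj, inlW_mem_BSub]
    exact fun i => ‹H.Normal›.conj_mem _ ((mem_pi _).1 hv _ (Set.mem_univ _)) _

theorem mul_coe_eq_mul_coe_of_image_mk_eq {α : Type*} [Group α] {N : Subgroup α} {X Y : Set α}
    (h : ((↑) : α → α ⧸ N) '' X = (↑) '' Y) : X * N = Y * N := by
  rw [← QuotientGroup.preimage_image_mk_eq_mul, h, QuotientGroup.preimage_image_mk_eq_mul]

lemma shift_mem_of_invariant [NeZero p] {T : Subgroup (ZMod p → G)}
    (hT : ∀ v ∈ T, (fun i => v (i - 1)) ∈ T) (c : ZMod p) {v : ZMod p → G} (hv : v ∈ T) :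
    shift c v ∈ T := by
  suffices h : ∀ n : ℕ, shift (-(n : ZMod p)) v ∈ T by
    simpa using h (-c).val
  intro n
  induction n with
  | zero => convert hv; funext i; simp
  | succ n ih =>
    convert hT _ ih using 1
    funext i
    simp [sub_eq_add_neg, add_assoc]

lemma apply_mem_of_le_pi {H : Subgroup G} {T : Subgroup (ZMod p → G)}
    (hT : T ≤ Subgroup.pi Set.univ fun _ => H) {v : ZMod p → G} (hv : v ∈ T) (i : ZMod p) :
    v i ∈ H :=
  (mem_pi _).1 (hT hv) i (Set.mem_univ i)

lemma shift_mem_closure {S : Set (ZMod p → G)} {c : ZMod p} (hS : ∀ v ∈ S, shift c v ∈ S)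
    {v : ZMod p → G} (hv : v ∈ closure S) : shift c v ∈ closure S :=
  (closure_le (K := (closure S).comap (shiftAut p G (.ofAdd c)).toMonoidHom)).2
    (fun w hw => subset_closure (hS w hw)) hv

section Quotient

variable {H K : Subgroup G} [K.Normal]

variable (p) in
def baseQuot (K : Subgroup G) [K.Normal] : (ZMod p → G) →* W p G ⧸ BSub p G K :=
  (QuotientGroup.mk' _).comp (inlW p G)

lemma baseQuot_eq_one_iff {v : ZMod p → G} : baseQuot p K v = 1 ↔ ∀ i, v i ∈ K := by
  rw [baseQuot, MonoidHom.comp_apply, QuotientGroup.mk'_apply, QuotientGroup.eq_one_iff,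
    inlW_mem_BSub]

lemma commute_baseQuot (hHK : ⁅H, ⊤⁆ ≤ K) {v : ZMod p → G} (hv : ∀ i, v i ∈ H)
    (w : ZMod p → G) : Commute (baseQuot p K v) (baseQuot p K w) := by
  rw [← commutatorElement_eq_one_iff_commute, ← map_commutatorElement, baseQuot_eq_one_iff]
  exact fun i => hHK (commutator_mem_commutator (hv i) (mem_top (w i)))

lemma baseQuot_Delta_mul (hHK : ⁅H, ⊤⁆ ≤ K) {w : ZMod p → G} (hw : ∀ i, w i ∈ H)
    (v : ZMod p → G) :
    baseQuot p K (Delta p G (v * w)) = baseQuot p K (Delta p G v) * baseQuot p K (Delta p G w) := by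
  rw [Delta_mul, map_mul, map_mul, (commute_baseQuot (v := w⁻¹) hHK (fun i => inv_mem (hw i)) _).eq,
    mul_assoc, ← map_mul, ← Delta_eq]

lemma baseQuot_Delta_congr {v z : ZMod p → G} (h : baseQuot p K v = baseQuot p K z) :
    baseQuot p K (Delta p G v) = baseQuot p K (Delta p G z) := by
  obtain ⟨n, hn, rfl⟩ : ∃ n, (∀ i, n i ∈ K) ∧ z = v * n :=
    ⟨v⁻¹ * z, baseQuot_eq_one_iff.1 (by rw [map_mul, map_inv, h, inv_mul_cancel]), by group⟩
  rw [Delta_mul, map_mul, map_mul, map_inv, baseQuot_eq_one_iff.2 hn,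
    (baseQuot_eq_one_iff (v := shift (-1) n)).2 fun i => hn _, inv_one, one_mul, mul_one]

lemma image_Delta_subset_of_image_subset {S S' : Set (ZMod p → G)}
    (h : baseQuot p K '' S ⊆ baseQuot p K '' S') :
    (baseQuot p K ∘ Delta p G) '' S ⊆ (baseQuot p K ∘ Delta p G) '' S' := by
  rintro _ ⟨v, hv, rfl⟩
  obtain ⟨z, hz, hzv⟩ := h ⟨v, hv, rfl⟩
  exact ⟨z, hz, baseQuot_Delta_congr hzv⟩

def deltaHom (hHK : ⁅H, ⊤⁆ ≤ K) {T : Subgroup (ZMod p → G)}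
    (hT : T ≤ Subgroup.pi Set.univ fun _ => H) : T →* W p G ⧸ BSub p G K where
  toFun v := baseQuot p K (Delta p G v)
  map_one' := by simp [Delta_eq]
  map_mul' v w := baseQuot_Delta_mul hHK (apply_mem_of_le_pi hT w.2) v

lemma image_mk_commutator (T : Subgroup (ZMod p → G)) (L : Subgroup (W p G)) :
    ((↑) : W p G → W p G ⧸ BSub p G K) '' (⁅T.map (inlW p G), L⁆ : Subgroup (W p G)) =
      (⁅T.map (baseQuot p K), L.map (QuotientGroup.mk' (BSub p G K))⁆ : Subgroup _) := by
  rw [← QuotientGroup.coe_mk', ← coe_map, map_commutator, map_map]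
  rfl

section InvariantSubgroup

variable (hHK : ⁅H, ⊤⁆ ≤ K) {T : Subgroup (ZMod p → G)}
  (hT : T ≤ Subgroup.pi Set.univ fun _ => H)
include hHK hT

@[simp]
lemma deltaHom_apply (v : T) : deltaHom hHK hT v = baseQuot p K (Delta p G v) := rfl

lemma coe_range_deltaHom :
    ((deltaHom hHK hT).range : Set (W p G ⧸ BSub p G K)) = (baseQuot p K ∘ Delta p G) '' T := by
  rw [MonoidHom.coe_range, Set.image_eq_range]
  rfl

lemma commutator_map_baseQuot_top :
    ⁅T.map (baseQuot p K), ⊤⁆ =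
      ⁅T.map (baseQuot p K), (zpowers (sigma p G)).map (QuotientGroup.mk' (BSub p G K))⁆ := by
  refine le_antisymm ((commutator_le).2 ?_) (commutator_mono le_rfl le_top)
  rintro _ ⟨v, hv, rfl⟩ y -
  obtain ⟨w, rfl⟩ := QuotientGroup.mk'_surjective _ y
  rw [← inr_mul_inlW w, map_mul, commutatorElement_mul_right_eq_mul_conj]
  change ⁅baseQuot p K v, _⁆ * _ * ⁅baseQuot p K v, baseQuot p K _⁆ * _ ∈ _
  rw [commutatorElement_eq_one_iff_commute.2 (commute_baseQuot hHK (apply_mem_of_le_pi hT hv) _),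
    mul_one, mul_inv_cancel_right]
  exact commutator_mem_commutator (mem_map_of_mem _ hv)
    (mem_map_of_mem _ (inr_mem_zpowers_sigma _))

lemma baseQuot_mul_inv_shift_mem_range [NeZero p] (hTs : ∀ v ∈ T, (fun i => v (i - 1)) ∈ T)
    {v : ZMod p → G} (hv : v ∈ T) (c : ZMod p) :
    baseQuot p K (v * (shift c v)⁻¹) ∈ (deltaHom hHK hT).range := by
  obtain ⟨n, rfl⟩ := ZMod.natCast_zmod_surjective c
  induction n with
  | zero =>
    rw [Nat.cast_zero, shift_zero, mul_inv_cancel, map_one]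
    exact one_mem _
  | succ n ih =>
    set w := shift ((n + 1 : ℕ) : ZMod p) v
    have hw : w ∈ T := shift_mem_of_invariant hTs _ hv
    have hshift : shift (-1) w = shift (n : ZMod p) v := by
      rw [shift_shift]; congr 1; push_cast; ring
    have hcomm := (commute_baseQuot hHK (apply_mem_of_le_pi hT hw) (shift (n : ZMod p) v)).inv_left
    have key : baseQuot p K (v * w⁻¹) =
        baseQuot p K (v * (shift (n : ZMod p) v)⁻¹) * deltaHom hHK hT ⟨w, hw⟩ := by
      rw [deltaHom_apply, Delta_eq, hshift]
      simp only [map_mul, map_inv]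
      rw [hcomm.eq]
      group
    rw [key]
    exact mul_mem ih ⟨_, rfl⟩

lemma commutator_zpowers_eq_range_deltaHom [NeZero p]
    (hTs : ∀ v ∈ T, (fun i => v (i - 1)) ∈ T) :
    ⁅T.map (baseQuot p K), (zpowers (sigma p G)).map (QuotientGroup.mk' (BSub p G K))⁆ =
      (deltaHom hHK hT).range := by
  refine le_antisymm ((commutator_le).2 ?_) ?_
  · rintro _ ⟨v, hv, rfl⟩ _ ⟨_, ⟨m, rfl⟩, rfl⟩
    change ⁅QuotientGroup.mk' _ (inlW p G v), QuotientGroup.mk' _ (sigma p G ^ m)⁆ ∈ _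
    rw [sigma_zpow, ← map_commutatorElement, commutatorElement_inlW_inr]
    exact baseQuot_mul_inv_shift_mem_range hHK hT hTs hv _
  · rintro _ ⟨v, rfl⟩
    change QuotientGroup.mk' _ (inlW p G (Delta p G v)) ∈ _
    rw [inlW_Delta, map_commutatorElement, map_inv, map_inv]
    exact commutator_mem_commutator (inv_mem (mem_map_of_mem _ v.2))
      (inv_mem (mem_map_of_mem _ (mem_zpowers _)))

theorem commutator_mul_BSub_eq [NeZero p] (hTs : ∀ v ∈ T, (fun i => v (i - 1)) ∈ T) :
    ((⁅T.map (inlW p G), ⊤⁆ : Subgroup (W p G)) : Set (W p G)) * BSub p G K =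
        (⁅T.map (inlW p G), zpowers (sigma p G)⁆ : Subgroup (W p G)) * BSub p G K ∧
      ((⁅T.map (inlW p G), ⊤⁆ : Subgroup (W p G)) : Set (W p G)) * BSub p G K =
        inlW p G '' (Delta p G '' T) * BSub p G K := by
  have htop := commutator_map_baseQuot_top hHK hT
  constructor <;> apply mul_coe_eq_mul_coe_of_image_mk_eq <;>
    rw [image_mk_commutator, map_top_of_surjective _ (QuotientGroup.mk'_surjective _), htop]
  · rw [image_mk_commutator]
  · rw [commutator_zpowers_eq_range_deltaHom hHK hT hTs,
      coe_range_deltaHom, Set.image_image, Set.image_image]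
    rfl

end InvariantSubgroup

lemma closure_le_pi {H : Subgroup G} {S : Set (ZMod p → G)} (hS : ∀ v ∈ S, ∀ i, v i ∈ H) :
    closure S ≤ Subgroup.pi Set.univ fun _ => H :=
  (closure_le _).2 fun v hv => (mem_pi _).2 fun i _ => hS v hv i

lemma image_Delta_closure (hHK : ⁅H, ⊤⁆ ≤ K) {S : Set (ZMod p → G)}
    (hS : ∀ v ∈ S, ∀ i, v i ∈ H) :
    (baseQuot p K ∘ Delta p G) '' closure S = closure ((baseQuot p K ∘ Delta p G) '' S) := by
  have hT := closure_le_pi hS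
  have hcomp : ⇑(deltaHom hHK hT) = (baseQuot p K ∘ Delta p G) ∘ (↑) := rfl
  rw [← coe_range_deltaHom hHK hT, MonoidHom.range_eq_map, ← closure_closure_coe_preimage,
    MonoidHom.map_closure, hcomp, Set.image_comp,
    Set.image_preimage_eq_of_subset (by simp [Subgroup.subset_closure])]

lemma image_Delta_closure_eq_of_closure_image {S : Set (ZMod p → G)}
    (h : (closure (baseQuot p K '' S) : Set (W p G ⧸ BSub p G K)) = baseQuot p K '' S) :
    (baseQuot p K ∘ Delta p G) '' closure S = (baseQuot p K ∘ Delta p G) '' S := by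
  have himage : baseQuot p K '' closure S = baseQuot p K '' S := by
    rw [← coe_map, MonoidHom.map_closure, h]
  exact subset_antisymm (image_Delta_subset_of_image_subset himage.le)
    (image_Delta_subset_of_image_subset himage.ge)

section Iterates

variable {J : Subgroup G}

lemma mapsTo_Delta : Set.MapsTo (Delta p G) {v | ∀ t, v t ∈ J} {v | ∀ t, v t ∈ J} := by
  intro v hv i
  rw [Delta_eq]
  exact mul_mem (inv_mem (hv i)) (hv _)

lemma shift_mem_image_iterate_Delta (c : ZMod p) (m : ℕ) {v : ZMod p → G}
    (hv : v ∈ (Delta p G)^[m] '' {v | ∀ t, v t ∈ J}) :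
    shift c v ∈ (Delta p G)^[m] '' {v | ∀ t, v t ∈ J} := by
  obtain ⟨u, hu, rfl⟩ := hv
  have hcomm : Function.Commute (shift c) (Delta p G) := shift_Delta c
  exact ⟨shift c u, fun t => hu _, (hcomm.iterate_right m u).symm⟩

lemma closure_image_baseQuot_iterate_Delta (hHK : ⁅H, ⊤⁆ ≤ K) (hJ : J ≤ H) (m : ℕ) :
    (closure (baseQuot p K '' ((Delta p G)^[m] '' {v | ∀ t, v t ∈ J})) :
        Set (W p G ⧸ BSub p G K)) =
      baseQuot p K '' ((Delta p G)^[m] '' {v | ∀ t, v t ∈ J}) := by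
  induction m with
  | zero =>
    have hpi : {v : ZMod p → G | ∀ t, v t ∈ J} =
        ((Subgroup.pi Set.univ fun _ => J : Subgroup (ZMod p → G)) : Set (ZMod p → G)) := by
      ext v; simp [mem_pi]
    rw [Function.iterate_zero, Set.image_id, hpi, ← coe_map, closure_eq]
  | succ m ih =>
    have hE : ∀ v ∈ (Delta p G)^[m] '' {v | ∀ t, v t ∈ J}, ∀ i, v i ∈ H :=
      fun v hv i => hJ ((mapsTo_Delta.iterate m).image_subset hv i)
    rw [Function.iterate_succ', Set.image_comp, ← Set.image_comp (baseQuot p K),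
      ← image_Delta_closure hHK hE, image_Delta_closure_eq_of_closure_image ih]

end Iterates

end Quotient

end GGS

open GGS

theorem statement13_general (p : ℕ) [Fact p.Prime]
    (G : Type*) [Group G]
    (j : ℕ) (T : Subgroup (ZMod p → G))
    (hT1 : T ≤ Subgroup.pi Set.univ fun _ => (⊤ : Subgroup G).lowerCentralSeries (j - 1))
    (hT2 : ∀ v ∈ T, (fun i => v (i - 1)) ∈ T) :
    ((⁅Subgroup.map (inlW p G) T, (⊤ : Subgroup (W p G))⁆ : Subgroup (W p G)) *
        (BSub p G ((⊤ : Subgroup G).lowerCentralSeries j) : Set (W p G))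
      = (⁅Subgroup.map (inlW p G) T, Subgroup.zpowers (sigma p G)⁆ : Subgroup (W p G)) *
        (BSub p G ((⊤ : Subgroup G).lowerCentralSeries j) : Set (W p G)))
    ∧ ((⁅Subgroup.map (inlW p G) T, (⊤ : Subgroup (W p G))⁆ : Subgroup (W p G)) *
        (BSub p G ((⊤ : Subgroup G).lowerCentralSeries j) : Set (W p G))
      = ((inlW p G) '' (Delta p G '' (T : Set (ZMod p → G)))) *
        (BSub p G ((⊤ : Subgroup G).lowerCentralSeries j) : Set (W p G)))
    ∧ ∀ (J : Subgroup G), J ≤ (⊤ : Subgroup G).lowerCentralSeries (j - 1) → ∀ k : ℕ, 1 ≤ k →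
        ((⁅Subgroup.closure ((inlW p G) ''
              ((Delta p G)^[k - 1] '' {v : ZMod p → G | ∀ t, v t ∈ J})),
            (⊤ : Subgroup (W p G))⁆ : Subgroup (W p G)) *
          (BSub p G ((⊤ : Subgroup G).lowerCentralSeries j) : Set (W p G))
        = (⁅Subgroup.closure ((inlW p G) ''
              ((Delta p G)^[k - 1] '' {v : ZMod p → G | ∀ t, v t ∈ J})),
            Subgroup.zpowers (sigma p G)⁆ : Subgroup (W p G)) *
          (BSub p G ((⊤ : Subgroup G).lowerCentralSeries j) : Set (W p G)))
        ∧ ((⁅Subgroup.closure ((inlW p G) ''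
              ((Delta p G)^[k - 1] '' {v : ZMod p → G | ∀ t, v t ∈ J})),
            (⊤ : Subgroup (W p G))⁆ : Subgroup (W p G)) *
          (BSub p G ((⊤ : Subgroup G).lowerCentralSeries j) : Set (W p G))
        = ((inlW p G) '' ((Delta p G)^[k] '' {v : ZMod p → G | ∀ t, v t ∈ J})) *
          (BSub p G ((⊤ : Subgroup G).lowerCentralSeries j) : Set (W p G))) := by
  have : NeZero p := ⟨(Fact.out : p.Prime).ne_zero⟩
  have hγ : ⁅(⊤ : Subgroup G).lowerCentralSeries (j - 1), ⊤⁆ ≤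
      (⊤ : Subgroup G).lowerCentralSeries j := by
    rcases j with _ | j
    · exact le_top
    · exact le_rfl
  refine ⟨(commutator_mul_BSub_eq hγ hT1 hT2).1, (commutator_mul_BSub_eq hγ hT1 hT2).2,
    fun J hJ k hk => ?_⟩
  obtain ⟨k, rfl⟩ : ∃ k', k = k' + 1 := ⟨k - 1, by omega⟩
  rw [Nat.add_sub_cancel]
  set E := (Delta p G)^[k] '' {v : ZMod p → G | ∀ t, v t ∈ J}
  have hE : ∀ v ∈ E, ∀ i, v i ∈ (⊤ : Subgroup G).lowerCentralSeries (j - 1) :=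
    fun v hv i => hJ ((mapsTo_Delta.iterate _).image_subset hv i)
  have hEs : ∀ v ∈ closure E, (fun i => v (i - 1)) ∈ closure E := fun v hv =>
    shift_neg_one v ▸ shift_mem_closure (fun w hw => shift_mem_image_iterate_Delta _ _ hw) hv
  obtain ⟨hσ, hΔ⟩ := commutator_mul_BSub_eq hγ (closure_le_pi hE) hEs
  rw [← MonoidHom.map_closure]
  refine ⟨hσ, hΔ.trans (mul_coe_eq_mul_coe_of_image_mk_eq ?_)⟩
  have h := image_Delta_closure_eq_of_closure_image (closure_image_baseQuot_iterate_Delta (p := p) hγ hJ k)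
  rw [Function.iterate_succ', Set.image_comp]
  simp only [Set.image_image] at h ⊢
  exact h

/-- For a finite p-group G, j ≥ 1 and a σ-invariant subgroup T ≤ B(γ_j(G)):
    modulo N = B(γ_{j+1}(G)) one has [T, W(G)] = [T, ⟨σ⟩] = Δ(T); consequently, for every
    J ≤ γ_j(G) and k ≥ 1, [Δ^{k−1}(B(J)), W(G)] ≡ [Δ^{k−1}(B(J)), ⟨σ⟩] ≡ Δ^k(B(J)) mod N.
    (Congruence mod N of subsets U, V is expressed as equality of the pointwise products
    U·N = V·N of subsets of W(G); γ_j(G) = `lowerCentralSeries G (j-1)`, and for the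
    "consequently" part the commutator is taken with the subgroup generated by the set
    Δ^{k−1}(B(J)).) -/
theorem statement13 (p : ℕ) [Fact p.Prime] (hp : Odd p)
    (G : Type*) [Group G] [Fintype G] (hG : IsPGroup p G)
    (j : ℕ) (hj : 1 ≤ j) (T : Subgroup (ZMod p → G))
    (hT1 : T ≤ Subgroup.pi Set.univ fun _ => (⊤ : Subgroup G).lowerCentralSeries (j - 1))
    (hT2 : ∀ v ∈ T, (fun i => v (i - 1)) ∈ T) :
    ((⁅Subgroup.map (inlW p G) T, (⊤ : Subgroup (W p G))⁆ : Subgroup (W p G)) *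
        (BSub p G ((⊤ : Subgroup G).lowerCentralSeries j) : Set (W p G))
      = (⁅Subgroup.map (inlW p G) T, Subgroup.zpowers (sigma p G)⁆ : Subgroup (W p G)) *
        (BSub p G ((⊤ : Subgroup G).lowerCentralSeries j) : Set (W p G)))
    ∧ ((⁅Subgroup.map (inlW p G) T, (⊤ : Subgroup (W p G))⁆ : Subgroup (W p G)) *
        (BSub p G ((⊤ : Subgroup G).lowerCentralSeries j) : Set (W p G))
      = ((inlW p G) '' (Delta p G '' (T : Set (ZMod p → G)))) *
        (BSub p G ((⊤ : Subgroup G).lowerCentralSeries j) : Set (W p G)))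
    ∧ ∀ (J : Subgroup G), J ≤ (⊤ : Subgroup G).lowerCentralSeries (j - 1) → ∀ k : ℕ, 1 ≤ k →
        ((⁅Subgroup.closure ((inlW p G) ''
              ((Delta p G)^[k - 1] '' {v : ZMod p → G | ∀ t, v t ∈ J})),
            (⊤ : Subgroup (W p G))⁆ : Subgroup (W p G)) *
          (BSub p G ((⊤ : Subgroup G).lowerCentralSeries j) : Set (W p G))
        = (⁅Subgroup.closure ((inlW p G) ''
              ((Delta p G)^[k - 1] '' {v : ZMod p → G | ∀ t, v t ∈ J})),
            Subgroup.zpowers (sigma p G)⁆ : Subgroup (W p G)) *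
          (BSub p G ((⊤ : Subgroup G).lowerCentralSeries j) : Set (W p G)))
        ∧ ((⁅Subgroup.closure ((inlW p G) ''
              ((Delta p G)^[k - 1] '' {v : ZMod p → G | ∀ t, v t ∈ J})),
            (⊤ : Subgroup (W p G))⁆ : Subgroup (W p G)) *
          (BSub p G ((⊤ : Subgroup G).lowerCentralSeries j) : Set (W p G))
        = ((inlW p G) '' ((Delta p G)^[k] '' {v : ZMod p → G | ∀ t, v t ∈ J})) *
          (BSub p G ((⊤ : Subgroup G).lowerCentralSeries j) : Set (W p G))) :=
  statement13_general p G j T hT1 hT2
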